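/- Let K be a compact subset of ℝ of infinite cardinality with cap(K) ≥ 1. Then for any two polynomials P, Q with integer coefficients whose restrictions to K are distinct functions, one has ‖P − Q‖_K ≥ 1; in other words, the set of integer polynomials is discrete in C⁰(K, ℝ) with the sup norm. -/

import Mathlib

open Polynomial Filter

/-- The sup norm of a real polynomial on a set `K ⊆ ℝ`. -/
noncomputable def supNormOn (K : Set ℝ) (P : Polynomial ℝ) : ℝ :=
  sSup ((fun x => |P.eval x|) '' K)

/-- `m_n(K)`: the infimum of sup norms on `K` of monic real polynomials of degree `n`. -/
noncomputable def chebInf (K : Set ℝ) (n : ℕ) : ℝ :=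
  sInf (supNormOn K '' {P : Polynomial ℝ | P.Monic ∧ P.natDegree = n})

/-!
Let `S = P - Q`, a nonzero integer polynomial of degree `n`, so its leading coefficient
`a` satisfies `|a| ≥ 1`. If `n = 0` then `|S| = |a| ≥ 1` on `K`. Otherwise `a⁻ᵏ Sᵏ` is
monic of degree `nk` with sup norm at most `‖S‖_Kᵏ`, so `m_{nk}(K)^{1/(nk)} ≤ ‖S‖_K^{1/n}`;
letting `k → ∞` gives `1 ≤ cap(K) ≤ ‖S‖_K^{1/n}`, hence `‖S‖_K ≥ 1`.
-/

section SupNorm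

variable {K : Set ℝ}

lemma abs_eval_le_supNormOn (hK : IsCompact K) (p : ℝ[X]) {x : ℝ} (hx : x ∈ K) :
    |p.eval x| ≤ supNormOn K p :=
  le_csSup (hK.image p.continuous.abs).bddAbove ⟨x, hx, rfl⟩

lemma supNormOn_nonneg (K : Set ℝ) (p : ℝ[X]) : 0 ≤ supNormOn K p :=
  Real.sSup_nonneg (by rintro _ ⟨x, -, rfl⟩; exact abs_nonneg _)

lemma supNormOn_le {p : ℝ[X]} {a : ℝ} (ha : 0 ≤ a) (h : ∀ x ∈ K, |p.eval x| ≤ a) :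
    supNormOn K p ≤ a :=
  Real.sSup_le (by rintro _ ⟨x, hx, rfl⟩; exact h x hx) ha

lemma chebInf_nonneg (K : Set ℝ) (n : ℕ) : 0 ≤ chebInf K n :=
  Real.sInf_nonneg (by rintro _ ⟨p, -, rfl⟩; exact supNormOn_nonneg K p)

lemma chebInf_natDegree_le {p : ℝ[X]} (hp : p.Monic) :
    chebInf K p.natDegree ≤ supNormOn K p :=
  csInf_le ⟨0, by rintro _ ⟨q, -, rfl⟩; exact supNormOn_nonneg K q⟩ ⟨p, ⟨hp, rfl⟩, rfl⟩

end SupNorm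

section Capacity

variable {K : Set ℝ} (hK : IsCompact K) {S : ℝ[X]} (hS : 1 ≤ |S.leadingCoeff|)
include hK hS

lemma chebInf_natDegree_mul_le (k : ℕ) :
    chebInf K (S.natDegree * k) ≤ supNormOn K S ^ k := by
  have ha : S.leadingCoeff ≠ 0 := abs_pos.mp (one_pos.trans_le hS)
  set U := C S.leadingCoeff⁻¹ * S
  have hU : U.Monic := monic_C_mul_of_mul_leadingCoeff_eq_one (inv_mul_cancel₀ ha)
  have hdeg : (U ^ k).natDegree = S.natDegree * k := by
    rw [hU.natDegree_pow, natDegree_C_mul (inv_ne_zero ha), mul_comm]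
  refine hdeg ▸ (chebInf_natDegree_le (hU.pow k)).trans
    (supNormOn_le (pow_nonneg (supNormOn_nonneg K S) k) ?_)
  intro x hx
  have hinv : |S.leadingCoeff⁻¹| ≤ 1 := by rw [abs_inv]; exact inv_le_one_of_one_le₀ hS
  calc |(U ^ k).eval x| = (|S.leadingCoeff⁻¹| * |S.eval x|) ^ k := by
        simp only [U, eval_pow, eval_mul, eval_C, abs_pow, abs_mul]
    _ ≤ (1 * supNormOn K S) ^ k := by
        gcongr
        exact abs_eval_le_supNormOn hK S hx
    _ = supNormOn K S ^ k := by rw [one_mul]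

lemma le_supNormOn_rpow_of_tendsto {c : ℝ}
    (hc : Tendsto (fun n : ℕ => chebInf K n ^ ((n : ℝ)⁻¹)) atTop (nhds c))
    (hdeg : 0 < S.natDegree) :
    c ≤ supNormOn K S ^ (S.natDegree : ℝ)⁻¹ := by
  set n := S.natDegree
  have hsub :
      Tendsto (fun k : ℕ => chebInf K (n * k) ^ (((n * k : ℕ) : ℝ))⁻¹) atTop (nhds c) :=
    hc.comp (tendsto_atTop_mono (fun k => Nat.le_mul_of_pos_left k hdeg) tendsto_id)
  refine le_of_tendsto hsub ?_
  filter_upwards [eventually_ge_atTop 1] with k hk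
  have hM := supNormOn_nonneg K S
  calc chebInf K (n * k) ^ (((n * k : ℕ) : ℝ))⁻¹
      ≤ (supNormOn K S ^ k) ^ (((n * k : ℕ) : ℝ))⁻¹ := by
        gcongr
        · exact chebInf_nonneg K _
        · exact chebInf_natDegree_mul_le hK hS k
    _ = supNormOn K S ^ (n : ℝ)⁻¹ := by
        rw [← Real.rpow_natCast_mul hM]
        congr 1
        have : (k : ℝ) ≠ 0 := by positivity
        push_cast
        field_simp

lemma one_le_supNormOn_of_one_le_capacity (hne : K.Nonempty) {c : ℝ}
    (hc : Tendsto (fun n : ℕ => chebInf K n ^ ((n : ℝ)⁻¹)) atTop (nhds c)) (hcap : 1 ≤ c) :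
    1 ≤ supNormOn K S := by
  rcases (S.natDegree).eq_zero_or_pos with h0 | hpos
  · obtain ⟨x, hx⟩ := hne
    have hconst : S.eval x = S.leadingCoeff := by
      rw [leadingCoeff, h0, ← eval_C (a := S.coeff 0) (x := x),
        ← eq_C_of_natDegree_eq_zero h0]
    exact hS.trans (hconst ▸ abs_eval_le_supNormOn hK S hx)
  · by_contra! hlt
    have hinv : (0 : ℝ) < (S.natDegree : ℝ)⁻¹ := by positivity
    linarith [le_supNormOn_rpow_of_tendsto hK hS hc hpos,
      Real.rpow_lt_one (supNormOn_nonneg K S) hlt hinv]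

end Capacity

lemma one_le_abs_leadingCoeff_map_intCast {p : ℤ[X]} (hp : p ≠ 0) :
    1 ≤ |(p.map (Int.castRingHom ℝ)).leadingCoeff| := by
  rw [leadingCoeff_map_of_injective (RingHom.injective_int _), eq_intCast, ← Int.cast_abs]
  exact_mod_cast Int.one_le_abs (leadingCoeff_ne_zero.mpr hp)

theorem int_polys_discrete_general (K : Set ℝ) (hK : IsCompact K)
    (c : ℝ) (hc : Tendsto (fun n : ℕ => chebInf K n ^ ((n : ℝ)⁻¹)) atTop (nhds c))
    (hcap : 1 ≤ c)
    (P Q : Polynomial ℤ) (hPQ : ∃ x ∈ K, Polynomial.aeval x P ≠ (Polynomial.aeval x Q : ℝ)) :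
    1 ≤ supNormOn K ((P - Q).map (Int.castRingHom ℝ)) := by
  obtain ⟨x, hx, hPQx⟩ := hPQ
  have hne : P - Q ≠ 0 := sub_ne_zero.mpr fun h => hPQx (h ▸ rfl)
  exact one_le_supNormOn_of_one_le_capacity hK (one_le_abs_leadingCoeff_map_intCast hne)
    ⟨x, hx⟩ hc hcap

/-- If `cap(K) ≥ 1`, then any two integer polynomials whose restrictions to `K` are distinct
are at sup-distance at least `1`: `ℤ[T]` is discrete in `C⁰(K, ℝ)`. -/
theorem int_polys_discrete (K : Set ℝ) (hK : IsCompact K) (hKinf : K.Infinite)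
    (c : ℝ) (hc : Tendsto (fun n : ℕ => chebInf K n ^ ((n : ℝ)⁻¹)) atTop (nhds c))
    (hcap : 1 ≤ c)
    (P Q : Polynomial ℤ) (hPQ : ∃ x ∈ K, Polynomial.aeval x P ≠ (Polynomial.aeval x Q : ℝ)) :
    1 ≤ supNormOn K ((P - Q).map (Int.castRingHom ℝ)) :=
  int_polys_discrete_general K hK c hc hcap P Q hPQ
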